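/- (Main theorem, part 2) For each n ∈ ℕ let A_n be a symmetric (0,2)-tensor field on P_n, and assume that for every n ∈ ℕ and each scalar patched Markov embedding G_n : P_n → P_{n+1}, the pullback of A_{n+1} by G_n equals A_n. If A_1 and A_2 satisfy condition (C2), then there exists μ ≥ 0, independent of n, such that A_n = μ A_n^s for all n ∈ ℕ. -/

import Mathlib

/-!
Condition (C2) says that `A_2(e_i - e_j, e_k - e_l)_q = F(q_i, q_j) F(q_k, q_l)` with
`F(a, b) = 2 θ(a/(a+b)) / (a+b)`. A symmetric bilinear form of this rank-one shape forces the
cocycle identity `F(a, c) = F(a, b) + F(b, c)`, and `F` is homogeneous of degree `-1`; the only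
such functions are `F(x, y) = C (1/y - 1/x)`, whence `A_2 = C² A_2^s`.

`A^s` is itself invariant under scalar patched Markov embeddings, so pulling back gives
`A_1 = C² A_1^s`. For `n ≥ 2`, any two of the basis vectors `e_i - e_last` of `T P_{n+1}` vanish
at a common coordinate, hence are pushed forward from `P_n` by some `G_n^{α,σ}`; this carries
`A_n = C² A_n^s` up to `A_{n+1}`.
-/

open Finset

noncomputable section

/-- `Psim n` is the space `P_n` of positive probability measures on
`Ω_{n+1} = {1,…,n+1}`, viewed as a subset of `ℝ^{n+1}`. -/
def Psim (n : ℕ) : Set (Fin (n + 1) → ℝ) :=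
  {p | (∀ i, p i ∈ Set.Ioo (0 : ℝ) 1) ∧ ∑ i, p i = 1}

/-- The tangent space of `P_n` (at any point): vectors in `ℝ^{n+1}` whose
coordinates sum to zero. -/
def Tang (n : ℕ) : Set (Fin (n + 1) → ℝ) :=
  {X | ∑ i, X i = 0}

/-- `B` is a symmetric bilinear form on `ℝ^{n+1}` (the value of a symmetric
`(0,2)`-tensor field at a point). -/
def IsSymmBilin {n : ℕ} (B : (Fin (n + 1) → ℝ) → (Fin (n + 1) → ℝ) → ℝ) : Prop :=
  (∀ X Y, B X Y = B Y X) ∧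
  (∀ (c : ℝ) (X X' Y : Fin (n + 1) → ℝ), B (c • X + X') Y = c * B X Y + B X' Y)

/-- `A` is a family of symmetric `(0,2)`-tensor fields `A_n` on `P_n`
(indices `n ≥ 1`, matching the paper's `ℕ = {1,2,…}`). -/
def SymmTF (A : (n : ℕ) → (Fin (n + 1) → ℝ) → (Fin (n + 1) → ℝ) → (Fin (n + 1) → ℝ) → ℝ) :
    Prop :=
  ∀ n : ℕ, 0 < n → ∀ p ∈ Psim n, IsSymmBilin (A n p)

/-- The scalar patched Markov embedding `G_n^{α,σ} : P_n → P_{n+1}`,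
`G_n^{α,σ}(p) = α ∑_{i ∈ Ω_{n+1}} p(i) δ_{σ(i)} + (1-α) δ_{σ(n+2)}`. -/
def sPatch (n : ℕ) (α : ℝ) (σ : Equiv.Perm (Fin (n + 2))) (p : Fin (n + 1) → ℝ) :
    Fin (n + 2) → ℝ := fun I =>
  α * ∑ i : Fin (n + 1), p i * (if σ i.castSucc = I then 1 else 0) +
    (1 - α) * (if σ (Fin.last (n + 1)) = I then 1 else 0)

/-- The differential of `G_n^{α,σ}`: `dG(X) = α ∑_i X^i δ_{σ(i)}`. -/
def sPatchD (n : ℕ) (α : ℝ) (σ : Equiv.Perm (Fin (n + 2))) (X : Fin (n + 1) → ℝ) :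
    Fin (n + 2) → ℝ := fun I =>
  α * ∑ i : Fin (n + 1), X i * (if σ i.castSucc = I then 1 else 0)

/-- A general patched Markov embedding `G_n : P_n → P_{n+1}` with weights `a_i`:
`G_n(p) = ∑_i p(i) (a_i δ_{σ(i)} + (1-a_i) δ_{σ(n+2)})`. -/
def patch (n : ℕ) (a : Fin (n + 1) → ℝ) (σ : Equiv.Perm (Fin (n + 2)))
    (p : Fin (n + 1) → ℝ) : Fin (n + 2) → ℝ := fun I =>
  ∑ i : Fin (n + 1), p i * (a i * (if σ i.castSucc = I then 1 else 0) +
    (1 - a i) * (if σ (Fin.last (n + 1)) = I then 1 else 0))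

/-- The differential of a patched Markov embedding. -/
def patchD (n : ℕ) (a : Fin (n + 1) → ℝ) (σ : Equiv.Perm (Fin (n + 2)))
    (X : Fin (n + 1) → ℝ) : Fin (n + 2) → ℝ := fun I =>
  ∑ i : Fin (n + 1), X i * (a i * (if σ i.castSucc = I then 1 else 0) +
    (1 - a i) * (if σ (Fin.last (n + 1)) = I then 1 else 0))

/-- Invariance of the family `{A_n}` under scalar patched Markov embeddings:
the pullback of `A_{n+1}` by each `G_n^{α,σ}` equals `A_n`. -/
def InvariantSP
    (A : (n : ℕ) → (Fin (n + 1) → ℝ) → (Fin (n + 1) → ℝ) → (Fin (n + 1) → ℝ) → ℝ) : Prop :=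
  ∀ n : ℕ, 0 < n → ∀ α ∈ Set.Ioo (0 : ℝ) 1, ∀ σ : Equiv.Perm (Fin (n + 2)),
    ∀ p ∈ Psim n, ∀ X ∈ Tang n, ∀ Y ∈ Tang n,
      A (n + 1) (sPatch n α σ p) (sPatchD n α σ X) (sPatchD n α σ Y) = A n p X Y

/-- The vector field `Z_i^n` on `P_n`, with (constant) coordinates
`e_i - (1/(n+1)) ∑_j e_j`. -/
def Zvec (n : ℕ) (i : Fin (n + 1)) : Fin (n + 1) → ℝ :=
  fun k => (if k = i then 1 else 0) - 1 / (n + 1)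

/-- The uniform probability measure `b_n ∈ P_n`. -/
def bunif (n : ℕ) : Fin (n + 1) → ℝ := fun _ => 1 / (n + 1)

/-- The point `p_u ∈ P_1`: `p_u(1) = u`, `p_u(2) = 1 - u`. -/
def pu (u : ℝ) : Fin 2 → ℝ := ![u, 1 - u]

/-- The tensor field `A_n^d(X,Y)_p = ∑_i X^i Y^i / p(i)²`. -/
def Ad (n : ℕ) (p X Y : Fin (n + 1) → ℝ) : ℝ := ∑ i, X i * Y i / (p i) ^ 2

/-- The tensor field `A_n^s(X,Y)_p = (∑_i X^i/p(i)) (∑_j Y^j/p(j))`. -/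
def As (n : ℕ) (p X Y : Fin (n + 1) → ℝ) : ℝ := (∑ i, X i / p i) * (∑ j, Y j / p j)

/-- The Fisher metric `g_n^F(X,Y)_p = ∑_i X^i Y^i / p(i)`. -/
def Fish (n : ℕ) (p X Y : Fin (n + 1) → ℝ) : ℝ := ∑ i, X i * Y i / p i

/-- The point `ψ_u^σ(α) = G_1^{α,σ}(p_u) ∈ P_2` (the indices `1,2,3` of `Ω_3`
are `0,1,2 : Fin 3`). -/
def psiPt (α u : ℝ) (σ : Equiv.Perm (Fin 3)) : Fin 3 → ℝ := sPatch 1 α σ (pu u)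

/-- `E^k ⊂ TP_2`: the line spanned by `Z_i^2 - Z_j^2 = e_i - e_j` where
`{i,j,k} = {0,1,2}`; equivalently, the sum-zero vectors vanishing at `k`. -/
def Esub (k : Fin 3) : Set (Fin 3 → ℝ) := {W | (∑ i, W i = 0) ∧ W k = 0}

/-- `u_α^{ij}` (formed with `σ = id`). -/
def uRatio (α u : ℝ) (i j : Fin 3) : ℝ :=
  psiPt α u (Equiv.refl (Fin 3)) i /
    (psiPt α u (Equiv.refl (Fin 3)) i + psiPt α u (Equiv.refl (Fin 3)) j)

/-- The image `dH^{ij}_q(Z_1^1) = ((q(i)+q(j))/2) (Z_i^2 - Z_j^2)` of `Z_1^1`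
under the differential of `H_q^{ij} : P_1 → P_2`. -/
def dHvec (q : Fin 3 → ℝ) (i j : Fin 3) : Fin 3 → ℝ :=
  ((q i + q j) / 2) • (Zvec 2 i - Zvec 2 j)

/-- Condition (C1) for `A_2`. -/
def CondC1 (A2 : (Fin 3 → ℝ) → (Fin 3 → ℝ) → (Fin 3 → ℝ) → ℝ) : Prop :=
  ∃ r : ℝ → ℝ, (∀ t : ℝ, 0 < t → 0 < r t) ∧ (∀ t : ℝ, 0 < t → r t * r (1 / t) = 1) ∧
    ∀ α ∈ Set.Ioo (0 : ℝ) 1, ∀ u ∈ Set.Ioo (0 : ℝ) 1, ∀ σ : Equiv.Perm (Fin 3),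
      ∀ W1 W2 W3 : Fin 3 → ℝ, W1 ∈ Esub (σ 0) → W2 ∈ Esub (σ 1) → W3 ∈ Esub (σ 2) →
        W3 = W1 + W2 →
        A2 (psiPt α u σ) W3 W1 = r (u / (1 - u)) * A2 (psiPt α u σ) W3 W2

/-- Condition (C2) for `A_1` and `A_2`: `A_1` is positive semidefinite and
degenerate at `b_1`, and the parallelism identity holds. -/
def CondC2 (A1 : (Fin 2 → ℝ) → (Fin 2 → ℝ) → (Fin 2 → ℝ) → ℝ)
    (A2 : (Fin 3 → ℝ) → (Fin 3 → ℝ) → (Fin 3 → ℝ) → ℝ) : Prop :=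
  (∀ p ∈ Psim 1, ∀ X ∈ Tang 1, 0 ≤ A1 p X X) ∧
  (∃ X ∈ Tang 1, X ≠ 0 ∧ ∀ Y ∈ Tang 1, A1 (bunif 1) X Y = 0) ∧
  (∀ α ∈ Set.Ioo (0 : ℝ) 1, ∀ u ∈ Set.Ioo (0 : ℝ) 1, ∀ σ : Equiv.Perm (Fin 3),
    ∀ i j k l : Fin 3, i ≠ j → k ≠ l →
      A2 (psiPt α u σ) (dHvec (psiPt α u σ) (σ i) (σ j)) (dHvec (psiPt α u σ) (σ k) (σ l)) =
        (Real.sign (2 * uRatio α u i j - 1) *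
            Real.sqrt (A1 (pu (uRatio α u i j)) (Zvec 1 0) (Zvec 1 0))) *
        (Real.sign (2 * uRatio α u k l - 1) *
            Real.sqrt (A1 (pu (uRatio α u k l)) (Zvec 1 0) (Zvec 1 0))))

/-- `H : P_m → P_n` (together with its linear differential `dH`) is a
composition of scalar patched Markov embeddings. -/
inductive IsSPMComp :
    (m n : ℕ) → ((Fin (m + 1) → ℝ) → (Fin (n + 1) → ℝ)) →
      ((Fin (m + 1) → ℝ) → (Fin (n + 1) → ℝ)) → Prop
  | refl (m : ℕ) : IsSPMComp m m id id
  | step {m n : ℕ} {H dH : (Fin (m + 1) → ℝ) → (Fin (n + 1) → ℝ)} (α : ℝ)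
      (hα : α ∈ Set.Ioo (0 : ℝ) 1) (σ : Equiv.Perm (Fin (n + 2)))
      (h : IsSPMComp m n H dH) :
      IsSPMComp m (n + 1) (fun p => sPatch n α σ (H p)) (fun X => sPatchD n α σ (dH X))

/-- `Q` is a Markov partition: each `Q i` is a probability measure on `Ω_{N+1}`
and the supports of the `Q i` are pairwise disjoint with union `Ω_{N+1}`. -/
def IsMarkovPartition {n N : ℕ} (Q : Fin (n + 1) → Fin (N + 1) → ℝ) : Prop :=
  (∀ i, (∀ I, 0 ≤ Q i I) ∧ ∑ I, Q i I = 1) ∧ (∀ I, ∃! i, Q i I ≠ 0)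

/-- The Markov embedding `F(p) = ∑_i p(i) Q_i` induced by `Q` (the same formula
gives its differential on tangent vectors). -/
def mEmb {n N : ℕ} (Q : Fin (n + 1) → Fin (N + 1) → ℝ) (p : Fin (n + 1) → ℝ) :
    Fin (N + 1) → ℝ := fun I => ∑ i, p i * Q i I

/-- `A_n^{λ,μ} = λ A_n^d + μ A_n^s`. -/
def Alm (n : ℕ) (lam mu : ℝ) (p X Y : Fin (n + 1) → ℝ) : ℝ :=
  lam * Ad n p X Y + mu * As n p X Y

namespace IsSymmBilin

variable {n : ℕ} {B : (Fin (n + 1) → ℝ) → (Fin (n + 1) → ℝ) → ℝ}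

lemma add_left (hB : IsSymmBilin B) (X X' Y : Fin (n + 1) → ℝ) :
    B (X + X') Y = B X Y + B X' Y := by
  simpa using hB.2 1 X X' Y

lemma zero_left (hB : IsSymmBilin B) (Y : Fin (n + 1) → ℝ) : B 0 Y = 0 := by
  simpa using hB.add_left 0 0 Y

lemma smul_left (hB : IsSymmBilin B) (c : ℝ) (X Y : Fin (n + 1) → ℝ) :
    B (c • X) Y = c * B X Y := by
  simpa [hB.zero_left] using hB.2 c X 0 Y

lemma add_right (hB : IsSymmBilin B) (X Y Y' : Fin (n + 1) → ℝ) :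
    B X (Y + Y') = B X Y + B X Y' := by
  rw [hB.1, hB.add_left, hB.1 Y, hB.1 Y']

lemma smul_right (hB : IsSymmBilin B) (c : ℝ) (X Y : Fin (n + 1) → ℝ) :
    B X (c • Y) = c * B X Y := by
  rw [hB.1, hB.smul_left, hB.1]

def toBilinForm (hB : IsSymmBilin B) : LinearMap.BilinForm ℝ (Fin (n + 1) → ℝ) :=
  LinearMap.mk₂ ℝ B hB.add_left hB.smul_left hB.add_right hB.smul_right

@[simp]
lemma toBilinForm_apply (hB : IsSymmBilin B) (X Y : Fin (n + 1) → ℝ) :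
    hB.toBilinForm X Y = B X Y := rfl

lemma eq_add_of_eq_mul (hB : IsSymmBilin B) {x y : Fin (n + 1) → ℝ} {a b c : ℝ}
    (hxx : B x x = a * a) (hxy : B x y = a * b) (hyy : B y y = b * b)
    (hzx : B (x + y) x = c * a) (hzy : B (x + y) y = c * b)
    (hzz : B (x + y) (x + y) = c * c) : c = a + b := by
  rw [hB.add_right, hzx, hzy] at hzz
  rw [hB.add_left, hxx, hB.1, hxy] at hzx
  rw [hB.add_left, hxy, hyy] at hzy
  have : (c - (a + b)) ^ 2 = 0 := by linear_combination -hzz + hzx + hzy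
  linarith [pow_eq_zero_iff two_ne_zero |>.mp this]

end IsSymmBilin

def eDiff {n : ℕ} (i j : Fin (n + 1)) : Fin (n + 1) → ℝ := Pi.single i 1 - Pi.single j 1

section eDiff

variable {n : ℕ}

@[simp]
lemma eDiff_self (i : Fin (n + 1)) : eDiff i i = 0 := sub_self _

lemma eDiff_add_eDiff (i j k : Fin (n + 1)) : eDiff i j + eDiff j k = eDiff i k := by
  simp [eDiff]

lemma eDiff_mem_Tang (i j : Fin (n + 1)) : eDiff i j ∈ Tang n := by
  simp [Tang, eDiff, Finset.sum_sub_distrib]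

lemma sum_eDiff_div (p : Fin (n + 1) → ℝ) (i j : Fin (n + 1)) :
    ∑ m, eDiff i j m / p m = 1 / p i - 1 / p j := by
  simp [eDiff, sub_div, Finset.sum_sub_distrib, Pi.single_apply, ite_div]

lemma eq_sum_smul_eDiff_last {X : Fin (n + 1) → ℝ} (hX : X ∈ Tang n) :
    X = ∑ i, X i • eDiff i (Fin.last n) := by
  have hX : ∑ i, X i = 0 := hX
  funext k
  simp [eDiff, Pi.single_apply, mul_sub, Finset.sum_sub_distrib, hX]

lemma IsSymmBilin.eq_of_eDiff_last {B B' : (Fin (n + 1) → ℝ) → (Fin (n + 1) → ℝ) → ℝ}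
    (hB : IsSymmBilin B) (hB' : IsSymmBilin B')
    (h : ∀ i k, i ≠ Fin.last n → k ≠ Fin.last n →
      B (eDiff i (Fin.last n)) (eDiff k (Fin.last n)) =
        B' (eDiff i (Fin.last n)) (eDiff k (Fin.last n)))
    {X Y : Fin (n + 1) → ℝ} (hX : X ∈ Tang n) (hY : Y ∈ Tang n) : B X Y = B' X Y := by
  have hbasis : ∀ i k, B (eDiff i (Fin.last n)) (eDiff k (Fin.last n)) =
      B' (eDiff i (Fin.last n)) (eDiff k (Fin.last n)) := by
    intro i k
    by_cases hi : i = Fin.last n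
    · simp [hi, hB.zero_left, hB'.zero_left]
    by_cases hk : k = Fin.last n
    · simp [hk, hB.1 _ 0, hB'.1 _ 0, hB.zero_left, hB'.zero_left]
    exact h i k hi hk
  rw [← hB.toBilinForm_apply, ← hB'.toBilinForm_apply, eq_sum_smul_eDiff_last hX,
    eq_sum_smul_eDiff_last hY]
  simp [map_sum, hbasis]

end eDiff

lemma isSymmBilin_mul_As {n : ℕ} (μ : ℝ) (p : Fin (n + 1) → ℝ) :
    IsSymmBilin (fun X Y => μ * As n p X Y) := by
  refine ⟨fun X Y => by simp only [As]; ring, fun c X X' Y => ?_⟩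
  simp only [As, Pi.add_apply, Pi.smul_apply, smul_eq_mul, add_div, Finset.sum_add_distrib,
    mul_div_assoc, ← Finset.mul_sum]
  ring

lemma As_eDiff {n : ℕ} (p : Fin (n + 1) → ℝ) (i j k l : Fin (n + 1)) :
    As n p (eDiff i j) (eDiff k l) = (1 / p i - 1 / p j) * (1 / p k - 1 / p l) := by
  simp only [As, sum_eDiff_div]

lemma mem_Psim_of_pos {n : ℕ} (hn : 0 < n) {p : Fin (n + 1) → ℝ} (hpos : ∀ i, 0 < p i)
    (hsum : ∑ i, p i = 1) : p ∈ Psim n := by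
  obtain ⟨n, rfl⟩ := Nat.exists_eq_add_of_lt hn
  refine ⟨fun i => ⟨hpos i, ?_⟩, hsum⟩
  obtain ⟨j, hji⟩ := exists_ne i
  rw [← hsum]
  exact Finset.single_lt_sum hji (mem_univ i) (mem_univ j) (hpos j)
    fun k _ _ => (hpos k).le

section sPatch

variable {n : ℕ} (α : ℝ) (σ : Equiv.Perm (Fin (n + 2)))

lemma sum_eq_sum_perm_castSucc_add (f : Fin (n + 2) → ℝ) :
    ∑ J, f J = ∑ m : Fin (n + 1), f (σ m.castSucc) + f (σ (Fin.last (n + 1))) := by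
  rw [← Equiv.sum_comp σ, Fin.sum_univ_castSucc]

lemma funext_perm_castSucc {f g : Fin (n + 2) → ℝ}
    (hcast : ∀ m : Fin (n + 1), f (σ m.castSucc) = g (σ m.castSucc))
    (hlast : f (σ (Fin.last (n + 1))) = g (σ (Fin.last (n + 1)))) : f = g := by
  funext J
  obtain ⟨J, rfl⟩ := σ.surjective J
  induction J using Fin.lastCases with
  | last => exact hlast
  | cast m => exact hcast m

@[simp]
lemma sPatch_apply_castSucc (p : Fin (n + 1) → ℝ) (m : Fin (n + 1)) :
    sPatch n α σ p (σ m.castSucc) = α * p m := by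
  simp [sPatch, (Fin.castSucc_lt_last m).ne']

@[simp]
lemma sPatch_apply_last (p : Fin (n + 1) → ℝ) :
    sPatch n α σ p (σ (Fin.last (n + 1))) = 1 - α := by
  simp [sPatch]

@[simp]
lemma sPatchD_apply_castSucc (X : Fin (n + 1) → ℝ) (m : Fin (n + 1)) :
    sPatchD n α σ X (σ m.castSucc) = α * X m := by
  simp [sPatchD]

@[simp]
lemma sPatchD_apply_last (X : Fin (n + 1) → ℝ) :
    sPatchD n α σ X (σ (Fin.last (n + 1))) = 0 := by
  simp [sPatchD]

lemma sPatch_mem_Psim {α : ℝ} (hα : α ∈ Set.Ioo (0 : ℝ) 1) {p : Fin (n + 1) → ℝ}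
    (hp : p ∈ Psim n) : sPatch n α σ p ∈ Psim (n + 1) := by
  refine mem_Psim_of_pos n.succ_pos (fun J => ?_) ?_
  · obtain ⟨J, rfl⟩ := σ.surjective J
    induction J using Fin.lastCases with
    | last => simpa using hα.2
    | cast m => simpa using mul_pos hα.1 (hp.1 m).1
  · rw [sum_eq_sum_perm_castSucc_add σ]
    simp [← Finset.mul_sum, hp.2]

lemma sPatchD_mem_Tang {X : Fin (n + 1) → ℝ} (hX : X ∈ Tang n) :
    sPatchD n α σ X ∈ Tang (n + 1) := by
  have hX : ∑ i, X i = 0 := hX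
  show ∑ J, sPatchD n α σ X J = 0
  simp [sum_eq_sum_perm_castSucc_add σ, ← Finset.mul_sum, hX]

lemma As_sPatch {α : ℝ} (hα : α ≠ 0) (p X Y : Fin (n + 1) → ℝ) :
    As (n + 1) (sPatch n α σ p) (sPatchD n α σ X) (sPatchD n α σ Y) = As n p X Y := by
  simp [As, sum_eq_sum_perm_castSucc_add σ, mul_div_mul_left _ _ hα]

lemma exists_sPatch_eq (hn : 0 < n) {q : Fin (n + 2) → ℝ} (hq : q ∈ Psim (n + 1)) :
    ∃ α ∈ Set.Ioo (0 : ℝ) 1, ∃ p ∈ Psim n, sPatch n α σ p = q ∧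
      ∀ W ∈ Tang (n + 1), W (σ (Fin.last (n + 1))) = 0 →
        ∃ X ∈ Tang n, sPatchD n α σ X = W := by
  set α := 1 - q (σ (Fin.last (n + 1)))
  have hα : α ∈ Set.Ioo (0 : ℝ) 1 := by
    have := hq.1 (σ (Fin.last (n + 1))); constructor <;> linarith [this.1, this.2]
  have hα0 : α ≠ 0 := hα.1.ne'
  have hq_sum : ∑ m : Fin (n + 1), q (σ m.castSucc) = α := by
    have := hq.2; rw [sum_eq_sum_perm_castSucc_add σ] at this; linarith
  refine ⟨α, hα, fun m => q (σ m.castSucc) / α, ?_, ?_, ?_⟩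
  · refine mem_Psim_of_pos hn (fun m => div_pos (hq.1 _).1 hα.1) ?_
    rw [← Finset.sum_div, hq_sum, div_self hα0]
  · exact funext_perm_castSucc σ (fun m => by simp [mul_div_cancel₀ _ hα0]) (by simp [α])
  · intro W hW hW_last
    have hW : ∑ J, W J = 0 := hW
    refine ⟨fun m => W (σ m.castSucc) / α, ?_, ?_⟩
    · show ∑ m : Fin (n + 1), W (σ m.castSucc) / α = 0
      rw [sum_eq_sum_perm_castSucc_add σ, hW_last, add_zero] at hW
      rw [← Finset.sum_div, hW, zero_div]
    · exact funext_perm_castSucc σ (fun m => by simp [mul_div_cancel₀ _ hα0]) (by simp [hW_last])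

end sPatch

/-- With `g x = F x 1`, homogeneity and the cocycle identity give `g (l * x) = g l + g x / l`;
comparing `g (2 * x)` with `g (x * 2)` solves for `g`. -/
lemma eq_of_cocycle_of_homogeneous {F : ℝ → ℝ → ℝ}
    (hhom : ∀ l a b, 0 < l → 0 < a → 0 < b → F (l * a) (l * b) = F a b / l)
    (hcoc : ∀ a b c, 0 < a → 0 < b → 0 < c → a + b + c = 1 → F a c = F a b + F b c)
    {x y : ℝ} (hx : 0 < x) (hy : 0 < y) : F x y = 2 * F 2 1 * (1 / y - 1 / x) := by
  have hcoc' : ∀ a b c, 0 < a → 0 < b → 0 < c → F a c = F a b + F b c := by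
    intro a b c ha hb hc
    set s := a + b + c
    have hs : 0 < s := by positivity
    have hscale : ∀ u v, 0 < u → 0 < v → F u v = F (u / s) (v / s) / s := by
      intro u v hu hv
      rw [← hhom s _ _ hs (by positivity) (by positivity), mul_div_cancel₀ _ hs.ne',
        mul_div_cancel₀ _ hs.ne']
    rw [hscale a c ha hc, hscale a b ha hb, hscale b c hb hc, ← add_div,
      hcoc (a / s) (b / s) (c / s) (by positivity) (by positivity) (by positivity)
        (by rw [← add_div, ← add_div, div_self hs.ne'])]
  have hself : ∀ a, 0 < a → F a a = 0 := fun a ha => by linarith [hcoc' a a a ha ha ha]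
  have hdiff : ∀ a b, 0 < a → 0 < b → F a b = F a 1 - F b 1 := fun a b ha hb => by
    linarith [hcoc' a 1 b ha one_pos hb, hcoc' b 1 b hb one_pos hb, hself b hb]
  have hmul : ∀ l a, 0 < l → 0 < a → F (l * a) 1 = F l 1 + F a 1 / l := fun l a hl ha => by
    have := hhom l a 1 hl ha one_pos
    rw [mul_one, hdiff _ _ (by positivity) hl] at this
    linarith
  have hg : ∀ a, 0 < a → F a 1 = 2 * F 2 1 * (1 - 1 / a) := fun a ha => by
    have h := hmul 2 a two_pos ha
    rw [mul_comm, hmul a 2 ha two_pos] at h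
    field_simp at h ⊢
    linarith
  rw [hdiff x y hx hy, hg x hx, hg y hy]
  ring

def AgreesWithAs
    (A : (n : ℕ) → (Fin (n + 1) → ℝ) → (Fin (n + 1) → ℝ) → (Fin (n + 1) → ℝ) → ℝ)
    (μ : ℝ) (n : ℕ) : Prop :=
  ∀ p ∈ Psim n, ∀ X ∈ Tang n, ∀ Y ∈ Tang n, A n p X Y = μ * As n p X Y

namespace AgreesWithAs

variable {A : (n : ℕ) → (Fin (n + 1) → ℝ) → (Fin (n + 1) → ℝ) → (Fin (n + 1) → ℝ) → ℝ}
  {μ : ℝ} {n : ℕ}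

lemma of_succ (hinv : InvariantSP A) (hn : 0 < n) (h : AgreesWithAs A μ (n + 1)) :
    AgreesWithAs A μ n := by
  intro p hp X hX Y hY
  have hα : (1 / 2 : ℝ) ∈ Set.Ioo (0 : ℝ) 1 := by norm_num
  rw [← hinv n hn _ hα 1 p hp X hX Y hY,
    h _ (sPatch_mem_Psim 1 hα hp) _ (sPatchD_mem_Tang _ 1 hX) _ (sPatchD_mem_Tang _ 1 hY),
    As_sPatch 1 (by norm_num)]

lemma succ (hsymm : SymmTF A) (hinv : InvariantSP A) (hn : 2 ≤ n) (h : AgreesWithAs A μ n) :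
    AgreesWithAs A μ (n + 1) := by
  intro q hq X hX Y hY
  refine (hsymm (n + 1) n.succ_pos q hq).eq_of_eDiff_last (isSymmBilin_mul_As μ q)
    (fun i k hi hk => ?_) hX hY
  obtain ⟨I, -, hI⟩ := Finset.exists_mem_notMem_of_card_lt_card
    (s := {i, k, Fin.last (n + 1)}) (t := univ) (card_le_three.trans_lt (by simp only [card_univ, Fintype.card_fin]; omega))
  simp only [mem_insert, mem_singleton, not_or] at hI
  set σ := Equiv.swap I (Fin.last (n + 1))
  have hσ : σ (Fin.last (n + 1)) = I := Equiv.swap_apply_right _ _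
  have hvanish : ∀ j ≠ I, eDiff j (Fin.last (n + 1)) (σ (Fin.last (n + 1))) = 0 := by
    intro j hj
    simp [hσ, eDiff, hj.symm, hI.2.2]
  obtain ⟨α, hα, p, hp, rfl, himage⟩ := exists_sPatch_eq σ (by omega) hq
  obtain ⟨X', hX', hX'eq⟩ := himage _ (eDiff_mem_Tang _ _) (hvanish i (Ne.symm hI.1))
  obtain ⟨Y', hY', hY'eq⟩ := himage _ (eDiff_mem_Tang _ _) (hvanish k (Ne.symm hI.2.1))
  rw [← hX'eq, ← hY'eq, hinv n (by omega) α hα σ p hp _ hX' _ hY', h p hp _ hX' _ hY',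
    As_sPatch σ hα.1.ne']

end AgreesWithAs

def signedNorm (A1 : (Fin 2 → ℝ) → (Fin 2 → ℝ) → (Fin 2 → ℝ) → ℝ) (t : ℝ) : ℝ :=
  Real.sign (2 * t - 1) * √(A1 (pu t) (Zvec 1 0) (Zvec 1 0))

/-- The coefficient `F` in `A_2(e_i - e_j, e_k - e_l)_q = F(q_i, q_j) F(q_k, q_l)`, read off from
(C2) using `dH^{ij}_q(Z_1^1) = ((q_i + q_j)/2) (e_i - e_j)`. -/
def pairCoeff (θ : ℝ → ℝ) (a b : ℝ) : ℝ := 2 / (a + b) * θ (a / (a + b))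

lemma pairCoeff_mul_mul (θ : ℝ → ℝ) {l : ℝ} (hl : l ≠ 0) (a b : ℝ) :
    pairCoeff θ (l * a) (l * b) = pairCoeff θ a b / l := by
  rw [pairCoeff, pairCoeff, ← mul_add, mul_div_mul_left _ _ hl, div_mul_eq_div_div_swap]
  ring

lemma pu_apply_zero {p : Fin 2 → ℝ} (hp : p ∈ Psim 1) : pu (p 0) = p := by
  have hsum : p 0 + p 1 = 1 := by simpa [Fin.sum_univ_two] using hp.2
  ext k
  fin_cases k
  · rfl
  · show 1 - p 0 = p 1
    linarith

lemma exists_psiPt_eq {q : Fin 3 → ℝ} (hq : q ∈ Psim 2) :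
    ∃ α ∈ Set.Ioo (0 : ℝ) 1, ∃ u ∈ Set.Ioo (0 : ℝ) 1, psiPt α u (Equiv.refl (Fin 3)) = q := by
  obtain ⟨α, hα, p, hp, hpq, -⟩ := exists_sPatch_eq (Equiv.refl (Fin 3)) one_pos hq
  exact ⟨α, hα, p 0, hp.1 0, by rw [psiPt, pu_apply_zero hp, hpq]⟩

lemma dHvec_eq_smul_eDiff (q : Fin 3 → ℝ) (i j : Fin 3) :
    dHvec q i j = ((q i + q j) / 2) • eDiff i j := by
  ext k
  simp [dHvec, Zvec, eDiff, Pi.single_apply]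

section CondC2

variable {A : (n : ℕ) → (Fin (n + 1) → ℝ) → (Fin (n + 1) → ℝ) → (Fin (n + 1) → ℝ) → ℝ}

lemma A_two_eDiff (hsymm : SymmTF A) (hC2 : CondC2 (A 1) (A 2)) {q : Fin 3 → ℝ}
    (hq : q ∈ Psim 2) {i j k l : Fin 3} (hij : i ≠ j) (hkl : k ≠ l) :
    A 2 q (eDiff i j) (eDiff k l) =
      pairCoeff (signedNorm (A 1)) (q i) (q j) * pairCoeff (signedNorm (A 1)) (q k) (q l) := by
  obtain ⟨α, hα, u, hu, hψ⟩ := exists_psiPt_eq hq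
  have h : A 2 (psiPt α u (Equiv.refl (Fin 3))) (dHvec (psiPt α u (Equiv.refl (Fin 3))) i j)
      (dHvec (psiPt α u (Equiv.refl (Fin 3))) k l) =
        signedNorm (A 1) (uRatio α u i j) * signedNorm (A 1) (uRatio α u k l) :=
    hC2.2.2 α hα u hu (Equiv.refl (Fin 3)) i j k l hij hkl
  have hB := hsymm 2 two_pos q hq
  simp only [uRatio, hψ, dHvec_eq_smul_eDiff, hB.smul_left, hB.smul_right] at h
  have hij_pos : 0 < q i + q j := add_pos (hq.1 i).1 (hq.1 j).1
  have hkl_pos : 0 < q k + q l := add_pos (hq.1 k).1 (hq.1 l).1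
  rw [pairCoeff, pairCoeff]
  field_simp at h ⊢
  linear_combination h

lemma pairCoeff_cocycle (hsymm : SymmTF A) (hC2 : CondC2 (A 1) (A 2)) {a b c : ℝ}
    (ha : 0 < a) (hb : 0 < b) (hc : 0 < c) (habc : a + b + c = 1) :
    pairCoeff (signedNorm (A 1)) a c =
      pairCoeff (signedNorm (A 1)) a b + pairCoeff (signedNorm (A 1)) b c := by
  have hq : ![a, b, c] ∈ Psim 2 :=
    mem_Psim_of_pos two_pos (fun i => by fin_cases i <;> simpa)
      (by simpa [Fin.sum_univ_three] using habc)
  have hB := hsymm 2 two_pos _ hq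
  have h := fun i j k l (hij : i ≠ j) (hkl : k ≠ l) => A_two_eDiff hsymm hC2 hq hij hkl
  have := hB.eq_add_of_eq_mul (h 0 1 0 1 (by decide) (by decide))
    (h 0 1 1 2 (by decide) (by decide)) (h 1 2 1 2 (by decide) (by decide))
    (by rw [eDiff_add_eDiff]; exact h 0 2 0 1 (by decide) (by decide))
    (by rw [eDiff_add_eDiff]; exact h 0 2 1 2 (by decide) (by decide))
    (by rw [eDiff_add_eDiff]; exact h 0 2 0 2 (by decide) (by decide))
  simpa using this

lemma pairCoeff_eq (hsymm : SymmTF A) (hC2 : CondC2 (A 1) (A 2)) {x y : ℝ}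
    (hx : 0 < x) (hy : 0 < y) :
    pairCoeff (signedNorm (A 1)) x y =
      2 * pairCoeff (signedNorm (A 1)) 2 1 * (1 / y - 1 / x) :=
  eq_of_cocycle_of_homogeneous (fun _ a b hl _ _ => pairCoeff_mul_mul _ hl.ne' a b)
    (fun _ _ _ ha hb hc habc => pairCoeff_cocycle hsymm hC2 ha hb hc habc) hx hy

lemma agreesWithAs_two (hsymm : SymmTF A) (hC2 : CondC2 (A 1) (A 2)) :
    AgreesWithAs A ((2 * pairCoeff (signedNorm (A 1)) 2 1) ^ 2) 2 := by
  intro q hq X hX Y hY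
  refine (hsymm 2 two_pos q hq).eq_of_eDiff_last (isSymmBilin_mul_As _ q)
    (fun i k hi hk => ?_) hX hY
  have hpos := fun i => (hq.1 i).1
  rw [A_two_eDiff hsymm hC2 hq hi hk, pairCoeff_eq hsymm hC2 (hpos _) (hpos _),
    pairCoeff_eq hsymm hC2 (hpos _) (hpos _), As_eDiff]
  ring

end CondC2

/-- **Main theorem, part 2.** If `{A_n}` is a family of symmetric
`(0,2)`-tensor fields invariant under scalar patched Markov embeddings and
`A_1`, `A_2` satisfy condition (C2), then there is `μ ≥ 0`, independent of `n`,
with `A_n = μ A_n^s` for all `n`. -/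
theorem main_part2
    (A : (n : ℕ) → (Fin (n + 1) → ℝ) → (Fin (n + 1) → ℝ) → (Fin (n + 1) → ℝ) → ℝ)
    (hsymm : SymmTF A) (hinv : InvariantSP A) (hC2 : CondC2 (A 1) (A 2)) :
    ∃ mu : ℝ, 0 ≤ mu ∧ ∀ n : ℕ, 0 < n → ∀ p ∈ Psim n, ∀ X ∈ Tang n, ∀ Y ∈ Tang n,
      A n p X Y = mu * As n p X Y := by
  obtain ⟨c, h2⟩ : ∃ c, AgreesWithAs A (c ^ 2) 2 := ⟨_, agreesWithAs_two hsymm hC2⟩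
  refine ⟨c ^ 2, sq_nonneg c, fun n hn => ?_⟩
  obtain rfl | hn2 : n = 1 ∨ 2 ≤ n := by omega
  · exact h2.of_succ hinv one_pos
  induction n, hn2 using Nat.le_induction with
  | base => exact h2
  | succ n hn2 ih => exact AgreesWithAs.succ hsymm hinv hn2 (ih (by omega))
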